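/- Assume the strong regularity assumption: there is a constant C > 0 such that dist₁(ts, S) ≤ C for every admissible direction s and every t > 0. Fix α, β > 0 and let (S_N)_{N≥2} be subsets of ℝ^d with {x ∈ S : f(x) > α/N} ⊆ S_N ⊆ {x ∈ S : f(x) ≥ β/N} for every N. Then the convergence is uniform: sup{ dist₁(rs, (1/log N)·S_N) : s admissible, 0 ≤ r ≤ 1/(γ(s)·s) } → 0 as N → ∞. -/

import Mathlib

/-
Put `u = log N`. For an admissible `s` and a radius `r'` kept a fixed distance `δ` inside
`(0, 1/(γ(s)·s))`, regularity gives `y ∈ S` within `C` of `(r' u) s`; then `‖y‖ ≈ r' u` and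
`y/‖y‖ ≈ s`, so by uniform continuity of `w ↦ γ(w)·w` on the compact sphere the exponent
`y·γ(ŷ)` is at most `(1 - p) u + O(1)` with `p > 0` depending only on `δ`. The asymptotics of `f`
then give `f(y) ≥ c e^{p u - O(1)} e^{-u} / √‖y‖ > α / N` for all large `N`, uniformly in `s`, so
`y ∈ S_N`, while `y / u` lies within `δ + C / u` of `r s`.
-/

open Filter Topology Pointwise

/-- ℓ¹ dot product on `ℝ^d` (with the `ℓ¹` norm, modelled by `PiLp 1`). -/
noncomputable def dotp {d : ℕ} (x y : PiLp 1 (fun _ : Fin d => ℝ)) : ℝ :=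
  ∑ j, x j * y j

/-- A direction `s` on the unit `ℓ¹` sphere is admissible for `S` if some sequence of `S`
goes to infinity with normalized terms converging to `s`. -/
def Admissible {d : ℕ} (S : Set (PiLp 1 (fun _ : Fin d => ℝ)))
    (s : PiLp 1 (fun _ : Fin d => ℝ)) : Prop :=
  ‖s‖ = 1 ∧ ∃ y : ℕ → PiLp 1 (fun _ : Fin d => ℝ), (∀ n, y n ∈ S) ∧
    Filter.Tendsto (fun n => ‖y n‖) Filter.atTop Filter.atTop ∧
    Filter.Tendsto (fun n => ‖y n‖⁻¹ • y n) Filter.atTop (nhds s)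

open Real Metric Set Asymptotics

lemma dotp_eq_norm_mul {d : ℕ} (z w : PiLp 1 (fun _ : Fin d => ℝ)) :
    dotp z w = ‖z‖ * dotp w (‖z‖⁻¹ • z) := by
  rcases eq_or_ne z 0 with rfl | hz
  · simp [dotp]
  · simp only [dotp, Finset.mul_sum, PiLp.smul_apply, smul_eq_mul]
    refine Finset.sum_congr rfl fun j _ => ?_
    field_simp [norm_ne_zero_iff.2 hz]

lemma ContinuousOn.dotp {X : Type*} [TopologicalSpace X] {d : ℕ}
    {F G : X → PiLp 1 (fun _ : Fin d => ℝ)} {s : Set X}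
    (hF : ContinuousOn F s) (hG : ContinuousOn G s) :
    ContinuousOn (fun x => _root_.dotp (F x) (G x)) s := by
  unfold _root_.dotp
  fun_prop

lemma IsCompact.exists_forall_mem_Icc_of_pos {X : Type*} [TopologicalSpace X] {K : Set X}
    (hK : IsCompact K) {g : X → ℝ} (hg : ContinuousOn g K) (hpos : ∀ x ∈ K, 0 < g x) :
    ∃ m > 0, ∃ M > 0, ∀ x ∈ K, g x ∈ Icc m M := by
  rcases K.eq_empty_or_nonempty with rfl | hne
  · exact ⟨1, one_pos, 1, one_pos, by simp⟩
  obtain ⟨x, hx, hmin⟩ := hK.exists_isMinOn hne hg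
  obtain ⟨y, hy, hmax⟩ := hK.exists_isMaxOn hne hg
  exact ⟨g x, hpos x hx, g y, hpos y hy, fun z hz => ⟨hmin hz, hmax hz⟩⟩

lemma exists_mem_Icc_abs_sub_le {r a δ : ℝ} (hδ : 0 ≤ δ) (hr : 0 ≤ r) (hra : r ≤ a)
    (hδa : 2 * δ ≤ a) : ∃ r' ∈ Icc δ (a - δ), |r - r'| ≤ δ := by
  refine ⟨max δ (min r (a - δ)), ⟨le_max_left _ _, max_le (by linarith) (min_le_right _ _)⟩, ?_⟩
  rw [abs_le]
  constructor <;> grind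

lemma eventually_mul_lt_mul_exp {p c : ℝ} (hp : 0 < p) (hc : 0 < c) (a b B : ℝ) :
    ∀ᶠ u in atTop, B * (a * u + b) < c * exp (p * u) := by
  have hid : (fun u : ℝ => u) =o[atTop] fun u => exp (p * u) := by
    simpa using isLittleO_pow_exp_pos_mul_atTop 1 hp
  have hlin : (fun u => a * u + b) =o[atTop] fun u => exp (p * u) := by
    simpa using (hid.const_mul_left a).add
      ((isLittleO_const_id_atTop 1).trans hid |>.const_mul_left b)
  filter_upwards [hlin.bound (div_pos hc (by positivity : (0 : ℝ) < |B| + 1))] with u hu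
  rw [norm_of_nonneg (exp_pos _).le] at hu
  calc B * (a * u + b) ≤ |B| * ‖a * u + b‖ := by
        rw [Real.norm_eq_abs, ← abs_mul]; exact le_abs_self _
    _ ≤ |B| * (c / (|B| + 1) * exp (p * u)) := by gcongr
    _ = c * exp (p * u) * (|B| / (|B| + 1)) := by ring
    _ < c * exp (p * u) :=
        mul_lt_of_lt_one_right (by positivity) ((div_lt_one (by positivity)).2 (by linarith))

lemma half_div_mul_exp_le_of_abs_sub_one_le {a b q D : ℝ} (hb : 0 < b) (hq : 0 < q)
    (h : |a * b⁻¹ * q * exp D - 1| ≤ 1 / 2) : b / 2 / q * exp (-D) ≤ a := by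
  have hhalf : 1 / 2 ≤ a * b⁻¹ * q * exp D := by linarith [(abs_le.1 h).1]
  calc b / 2 / q * exp (-D) = 1 / 2 * (b / q * exp (-D)) := by ring
    _ ≤ a * b⁻¹ * q * exp D * (b / q * exp (-D)) := by gcongr
    _ = a := by rw [exp_neg]; field_simp

lemma lt_div_sqrt_mul_exp {α c p K u x L D : ℝ} (hc : 0 < c) (hx : 0 < x) (hxL : x + 1 ≤ L)
    (hD : D ≤ (1 - p) * u + K) (hgrowth : α * exp K * L < c * exp (p * u)) :
    α * exp (-u) < c / √x * exp (-D) := by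
  have hL : 0 < L := by linarith
  have hsqrt : √x ≤ L := (sqrt_le_left hL.le).2 (by nlinarith)
  have hw : 0 < exp (-u - K) / L := by positivity
  calc α * exp (-u) = α * exp K * L * (exp (-u - K) / L) := by
        rw [sub_eq_add_neg, exp_add, exp_neg K]; field_simp
    _ < c * exp (p * u) * (exp (-u - K) / L) := mul_lt_mul_of_pos_right hgrowth hw
    _ = c / L * exp (-((1 - p) * u + K)) := by
        rw [mul_div_assoc', mul_assoc, ← exp_add]; ring_nf
    _ ≤ c / √x * exp (-D) := by gcongr

lemma mul_le_one_sub_mul_add {m M gs δ r u x gw C : ℝ} (hm : 0 < m) (hgs : gs ∈ Icc m M)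
    (hδ : 0 ≤ δ) (hr : r ≤ 1 / gs - δ) (hu : 0 ≤ u) (hC : 0 ≤ C) (hx0 : 0 ≤ x)
    (hx : x ≤ r * u + C) (hgw : gw ≤ gs + δ * m ^ 2 / 2) :
    x * gw ≤ (1 - δ * m / 2) * u + C * (M + δ * m ^ 2 / 2) := by
  obtain ⟨hmgs, hgsM⟩ := hgs
  have hgs0 : 0 < gs := hm.trans_le hmgs
  have hrgs : r * gs ≤ 1 - δ * m := by
    have := mul_le_mul_of_nonneg_right hr hgs0.le
    rw [sub_mul, one_div_mul_cancel hgs0.ne'] at this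
    nlinarith
  have hrm : r * m ≤ 1 :=
    (le_div_iff₀ hm).1 (by linarith [one_div_le_one_div_of_le hm hmgs] : r ≤ 1 / m)
  calc x * gw ≤ x * (gs + δ * m ^ 2 / 2) := mul_le_mul_of_nonneg_left hgw hx0
    _ ≤ (r * u + C) * (gs + δ * m ^ 2 / 2) := mul_le_mul_of_nonneg_right hx (by positivity)
    _ = r * gs * u + (r * m) * (δ * m / 2 * u) + C * (gs + δ * m ^ 2 / 2) := by ring
    _ ≤ (1 - δ * m) * u + 1 * (δ * m / 2 * u) + C * (M + δ * m ^ 2 / 2) := by gcongr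
    _ = (1 - δ * m / 2) * u + C * (M + δ * m ^ 2 / 2) := by ring

section

variable {E : Type*} [NormedAddCommGroup E] [NormedSpace ℝ E]

lemma abs_norm_sub_le_of_norm_smul_sub_le {s y : E} {t C : ℝ} (hs : ‖s‖ = 1) (ht : 0 ≤ t)
    (h : ‖t • s - y‖ ≤ C) : |‖y‖ - t| ≤ C := by
  calc |‖y‖ - t| = |‖y‖ - ‖t • s‖| := by rw [norm_smul, hs, mul_one, norm_of_nonneg ht]
    _ ≤ ‖y - t • s‖ := abs_norm_sub_norm_le _ _
    _ ≤ C := by rwa [norm_sub_rev]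

lemma norm_normalize_sub_le {s y : E} {t C : ℝ} (hs : ‖s‖ = 1) (ht : 0 ≤ t) (hy : y ≠ 0)
    (h : ‖t • s - y‖ ≤ C) : ‖‖y‖⁻¹ • y - s‖ ≤ 2 * C / ‖y‖ := by
  have hy' : 0 < ‖y‖ := norm_pos_iff.2 hy
  have hdecomp : ‖y‖⁻¹ • y - s = ‖y‖⁻¹ • ((y - t • s) + (t - ‖y‖) • s) := by
    rw [smul_add, smul_sub, sub_smul, smul_sub, inv_smul_smul₀ hy'.ne']; abel
  rw [hdecomp, norm_smul, norm_inv, norm_norm, inv_mul_eq_div]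
  gcongr
  calc ‖(y - t • s) + (t - ‖y‖) • s‖ ≤ ‖y - t • s‖ + ‖(t - ‖y‖) • s‖ := norm_add_le _ _
    _ ≤ C + C := by
      gcongr
      · rwa [norm_sub_rev]
      · rw [norm_smul, hs, mul_one, Real.norm_eq_abs, abs_sub_comm]
        exact abs_norm_sub_le_of_norm_smul_sub_le hs ht h
    _ = 2 * C := by ring

lemma dist_normalize_lt {s y : E} {t C ρ : ℝ} (hs : ‖s‖ = 1) (hρ : 0 < ρ)
    (h : ‖t • s - y‖ ≤ C) (ht : C + 2 * C / ρ < t) : 0 < ‖y‖ ∧ dist (‖y‖⁻¹ • y) s < ρ := by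
  have hCρ : 0 ≤ 2 * C / ρ := div_nonneg (by linarith [(norm_nonneg _).trans h]) hρ.le
  have ht0 : 0 ≤ t := by linarith [(norm_nonneg _).trans h]
  have hyρ : 2 * C / ρ < ‖y‖ := by
    linarith [(abs_le.1 (abs_norm_sub_le_of_norm_smul_sub_le hs ht0 h)).1]
  have hy0 : 0 < ‖y‖ := hCρ.trans_lt hyρ
  refine ⟨hy0, ?_⟩
  rw [dist_eq_norm]
  refine (norm_normalize_sub_le hs ht0 (norm_pos_iff.1 hy0) h).trans_lt ?_
  rw [div_lt_iff₀ hy0]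
  linarith [(div_lt_iff₀ hρ).1 hyρ]

lemma norm_smul_sub_inv_smul_le {s y : E} {r r' u : ℝ} (hs : ‖s‖ = 1) (hu : 0 < u) :
    ‖r • s - u⁻¹ • y‖ ≤ |r - r'| + ‖(r' * u) • s - y‖ / u := by
  have hdecomp : r • s - u⁻¹ • y = (r - r') • s + u⁻¹ • ((r' * u) • s - y) := by
    rw [smul_sub, smul_smul, mul_comm r' u, ← mul_assoc, inv_mul_cancel₀ hu.ne', one_mul,
      sub_smul]
    abel
  rw [hdecomp]
  refine (norm_add_le _ _).trans (le_of_eq ?_)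
  rw [norm_smul, norm_smul, hs, mul_one, Real.norm_eq_abs, norm_inv, Real.norm_eq_abs,
    abs_of_pos hu, inv_mul_eq_div]

lemma exists_lower_bound_of_asymptotics {c D f : E → ℝ} {c₁ : ℝ} (hc₁ : 0 < c₁)
    (hc : ∀ s ∈ sphere (0 : E) 1, c₁ ≤ c s)
    (hf : ∀ ε > (0 : ℝ), ∃ R > (0 : ℝ), ∀ z : E, ‖z‖ > R →
      |f z * (c (‖z‖⁻¹ • z))⁻¹ * √‖z‖ * exp (D z) - 1| ≤ ε) :
    ∃ R, ∀ z, R < ‖z‖ → c₁ / 2 / √‖z‖ * exp (-D z) ≤ f z := by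
  obtain ⟨R, hR, hfR⟩ := hf (1 / 2) (by norm_num)
  refine ⟨R, fun z hz => ?_⟩
  have hz0 : 0 < ‖z‖ := hR.trans hz
  have hcz : c₁ ≤ c (‖z‖⁻¹ • z) := hc _ (by simp [norm_smul, hz0.ne'])
  calc c₁ / 2 / √‖z‖ * exp (-D z) ≤ c (‖z‖⁻¹ • z) / 2 / √‖z‖ * exp (-D z) := by gcongr
    _ ≤ f z :=
      half_div_mul_exp_le_of_abs_sub_one_le (hc₁.trans_le hcz) (sqrt_pos.2 hz0) (hfR z hz)

theorem eventually_exists_mem_norm_smul_sub_inv_smul_le {S A : Set E} {f g : E → ℝ}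
    {C m M c R : ℝ} (α : ℝ) {ε : ℝ} (hε : 0 < ε) (hA : A ⊆ sphere 0 1)
    (hS : ∀ s ∈ A, ∀ t > (0 : ℝ), ∃ y ∈ S, ‖t • s - y‖ ≤ C)
    (hm : 0 < m) (hM : 0 < M) (hgIcc : ∀ s ∈ sphere (0 : E) 1, g s ∈ Icc m M)
    (hgu : UniformContinuousOn g (sphere 0 1)) (hc : 0 < c)
    (hf : ∀ z, R < ‖z‖ → c / √‖z‖ * exp (-(‖z‖ * g (‖z‖⁻¹ • z))) ≤ f z) :
    ∀ᶠ u in atTop, ∀ s ∈ A, ∀ r, 0 ≤ r → r ≤ 1 / g s →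
      ∃ y ∈ S, α * exp (-u) < f y ∧ ‖r • s - u⁻¹ • y‖ ≤ ε := by
  set δ := min (ε / 2) (1 / (2 * M))
  have hδ : 0 < δ := lt_min (by positivity) (by positivity)
  set η := δ * m ^ 2 / 2
  obtain ⟨ρ, hρ, hgρ⟩ := Metric.uniformContinuousOn_iff.1 hgu η (by positivity)
  filter_upwards [eventually_gt_atTop 0, eventually_ge_atTop (2 * C / ε),
    eventually_gt_atTop ((R + C) / δ), eventually_gt_atTop ((C + 2 * C / ρ) / δ),
    eventually_mul_lt_mul_exp (by positivity : 0 < δ * m / 2) hc (1 / m) (C + 1)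
      (α * exp (C * (M + η)))] with u hu huε huR huρ hgrowth
  intro s hs r hr0 hr1
  have hs1 : ‖s‖ = 1 := mem_sphere_zero_iff_norm.1 (hA hs)
  obtain ⟨hms, hsM⟩ := hgIcc s (hA hs)
  have hgs : 0 < g s := hm.trans_le hms
  have h2δ : 2 * δ ≤ 1 / g s :=
    calc 2 * δ ≤ 2 * (1 / (2 * M)) := by gcongr; exact min_le_right _ _
      _ = 1 / M := by field_simp
      _ ≤ 1 / g s := one_div_le_one_div_of_le hgs hsM
  -- Keeping `r'` a distance `δ` below `1 / g s` leaves a factor `exp (δ m u / 2)` in the bound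
  -- on `f y`, which absorbs the prefactor `1 / √‖y‖` and the error of `g` near `s`.
  obtain ⟨r', ⟨hδr', hr'⟩, hrr'⟩ := exists_mem_Icc_abs_sub_le hδ.le hr0 hr1 h2δ
  have ht : 0 < r' * u := mul_pos (hδ.trans_le hδr') hu
  obtain ⟨y, hyS, hy⟩ := hS s hs (r' * u) ht
  have hC : 0 ≤ C := (norm_nonneg _).trans hy
  obtain ⟨hyt, hyt'⟩ := abs_le.1 (abs_norm_sub_le_of_norm_smul_sub_le hs1 ht.le hy)
  have hδu : δ * u ≤ r' * u := by gcongr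
  rw [div_lt_iff₀ hδ] at huR huρ
  obtain ⟨hy0, hws⟩ := dist_normalize_lt hs1 hρ hy (by linarith)
  have hgw : g (‖y‖⁻¹ • y) ≤ g s + η := by
    linarith [abs_lt.1 (hgρ _ (by simp [norm_smul, hy0.ne']) s (hA hs) hws)]
  have hr'm : r' ≤ 1 / m := by linarith [one_div_le_one_div_of_le hm hms]
  have hD := mul_le_one_sub_mul_add (r := r') hm (hgIcc s (hA hs)) hδ.le hr' hu.le hC
    (norm_nonneg y) (by linarith) hgw
  refine ⟨y, hyS, ?_, ?_⟩
  · have hyL : ‖y‖ + 1 ≤ 1 / m * u + (C + 1) := by nlinarith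
    exact (lt_div_sqrt_mul_exp hc hy0 hyL hD hgrowth).trans_le (hf y (by linarith))
  · rw [div_le_iff₀ hε] at huε
    calc ‖r • s - u⁻¹ • y‖ ≤ |r - r'| + ‖(r' * u) • s - y‖ / u := norm_smul_sub_inv_smul_le hs1 hu
      _ ≤ δ + C / u := by gcongr
      _ ≤ ε / 2 + ε / 2 := add_le_add (min_le_left _ _) (by rw [div_le_iff₀ hu]; linarith)
      _ = ε := by ring

end

theorem stmt16_general {d : ℕ}
    (c : PiLp 1 (fun _ : Fin d => ℝ) → ℝ)
    (γ : PiLp 1 (fun _ : Fin d => ℝ) → PiLp 1 (fun _ : Fin d => ℝ))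
    (hc : ContinuousOn c {s : PiLp 1 (fun _ : Fin d => ℝ) | ‖s‖ = 1})
    (hγ : ContinuousOn γ {s : PiLp 1 (fun _ : Fin d => ℝ) | ‖s‖ = 1})
    (hcpos : ∀ s : PiLp 1 (fun _ : Fin d => ℝ), ‖s‖ = 1 → 0 < c s)
    (hγpos : ∀ s : PiLp 1 (fun _ : Fin d => ℝ), ‖s‖ = 1 → 0 < dotp (γ s) s)
    (f : PiLp 1 (fun _ : Fin d => ℝ) → ℝ)
    (hf : ∀ ε > (0 : ℝ), ∃ R > (0 : ℝ), ∀ z : PiLp 1 (fun _ : Fin d => ℝ), ‖z‖ > R →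
      |f z * (c (‖z‖⁻¹ • z))⁻¹ * Real.sqrt ‖z‖ *
        Real.exp (dotp z (γ (‖z‖⁻¹ • z))) - 1| ≤ ε)
    (S : Set (PiLp 1 (fun _ : Fin d => ℝ)))
    (C : ℝ)
    (hreg : ∀ s, Admissible S s → ∀ t > (0 : ℝ), Metric.infDist (t • s) S ≤ C)
    (α β : ℝ)
    (SN : ℕ → Set (PiLp 1 (fun _ : Fin d => ℝ)))
    (hSN : ∀ N : ℕ, 2 ≤ N →
      {x ∈ S | f x > α / N} ⊆ SN N ∧ SN N ⊆ {x ∈ S | f x ≥ β / N}) :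
    ∀ ε > (0 : ℝ), ∃ N₀ : ℕ, ∀ N : ℕ, N₀ ≤ N →
      ∀ s, Admissible S s → ∀ r : ℝ, 0 ≤ r → r ≤ 1 / dotp (γ s) s →
        Metric.infDist (r • s) ((Real.log N)⁻¹ • SN N) ≤ ε := by
  intro ε hε
  have hsph : {s : PiLp 1 (fun _ : Fin d => ℝ) | ‖s‖ = 1} = sphere 0 1 := by ext; simp
  rw [hsph] at hc hγ
  have hg : ContinuousOn (fun s => dotp (γ s) s) (sphere 0 1) := hγ.dotp continuousOn_id
  obtain ⟨m, hm, M, hM, hgIcc⟩ := (isCompact_sphere 0 1).exists_forall_mem_Icc_of_pos hg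
    fun s hs => hγpos s (mem_sphere_zero_iff_norm.1 hs)
  obtain ⟨c₁, hc₁, _, _, hc₁le⟩ := (isCompact_sphere 0 1).exists_forall_mem_Icc_of_pos hc
    fun s hs => hcpos s (mem_sphere_zero_iff_norm.1 hs)
  obtain ⟨R, hR⟩ := exists_lower_bound_of_asymptotics hc₁ (fun s hs => (hc₁le s hs).1) hf
  have hS : ∀ s ∈ {s | Admissible S s}, ∀ t > (0 : ℝ), ∃ y ∈ S, ‖t • s - y‖ ≤ C + 1 := by
    rintro s hs t ht
    obtain ⟨y, hy, -⟩ := hs.2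
    obtain ⟨z, hz, hdist⟩ :=
      (infDist_lt_iff ⟨y 0, hy 0⟩).1 ((hreg s hs t ht).trans_lt (lt_add_one C))
    exact ⟨z, hz, by rw [← dist_eq_norm]; exact hdist.le⟩
  have hev := eventually_exists_mem_norm_smul_sub_inv_smul_le α hε
    (fun s hs => mem_sphere_zero_iff_norm.2 hs.1) hS hm hM hgIcc
    ((isCompact_sphere 0 1).uniformContinuousOn_of_continuous hg) (half_pos hc₁)
    fun z hz => by simpa only [dotp_eq_norm_mul z] using hR z hz
  obtain ⟨N₀, hN₀⟩ := eventually_atTop.1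
    ((tendsto_log_atTop.comp tendsto_natCast_atTop_atTop).eventually hev)
  refine ⟨max N₀ 2, fun N hN s hs r hr0 hr1 => ?_⟩
  obtain ⟨y, hyS, hfy, hdist⟩ := hN₀ N (le_of_max_le_left hN) s hs r hr0 hr1
  have hN2 : 2 ≤ N := le_of_max_le_right hN
  have hy : y ∈ SN N := (hSN N hN2).1
    ⟨hyS, by simpa [exp_neg, exp_log (by positivity : (0 : ℝ) < N), div_eq_mul_inv] using hfy⟩
  calc infDist (r • s) ((log N)⁻¹ • SN N) ≤ dist (r • s) ((log N)⁻¹ • y) :=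
        infDist_le_dist_of_mem (smul_mem_smul_set hy)
    _ ≤ ε := by rwa [dist_eq_norm]

/-- Under the strong regularity assumption, the convergence of the rescaled sandpile
`(1/log N)·S_N` to the limit shape is uniform over admissible directions `s` and radii
`0 ≤ r ≤ 1/(γ(s)·s)`. -/
theorem stmt16 {d : ℕ} (hd : 1 ≤ d)
    (c : PiLp 1 (fun _ : Fin d => ℝ) → ℝ)
    (γ : PiLp 1 (fun _ : Fin d => ℝ) → PiLp 1 (fun _ : Fin d => ℝ))
    (hc : ContinuousOn c {s : PiLp 1 (fun _ : Fin d => ℝ) | ‖s‖ = 1})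
    (hγ : ContinuousOn γ {s : PiLp 1 (fun _ : Fin d => ℝ) | ‖s‖ = 1})
    (hcpos : ∀ s : PiLp 1 (fun _ : Fin d => ℝ), ‖s‖ = 1 → 0 < c s)
    (hγpos : ∀ s : PiLp 1 (fun _ : Fin d => ℝ), ‖s‖ = 1 → 0 < dotp (γ s) s)
    (f : PiLp 1 (fun _ : Fin d => ℝ) → ℝ)
    (hf : ∀ ε > (0 : ℝ), ∃ R > (0 : ℝ), ∀ z : PiLp 1 (fun _ : Fin d => ℝ), ‖z‖ > R →
      |f z * (c (‖z‖⁻¹ • z))⁻¹ * Real.sqrt ‖z‖ *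
        Real.exp (dotp z (γ (‖z‖⁻¹ • z))) - 1| ≤ ε)
    (S : Set (PiLp 1 (fun _ : Fin d => ℝ)))
    (C : ℝ) (hC : 0 < C)
    (hreg : ∀ s, Admissible S s → ∀ t > (0 : ℝ), Metric.infDist (t • s) S ≤ C)
    (α β : ℝ) (hα : 0 < α) (hβ : 0 < β)
    (SN : ℕ → Set (PiLp 1 (fun _ : Fin d => ℝ)))
    (hSN : ∀ N : ℕ, 2 ≤ N →
      {x ∈ S | f x > α / N} ⊆ SN N ∧ SN N ⊆ {x ∈ S | f x ≥ β / N}) :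
    ∀ ε > (0 : ℝ), ∃ N₀ : ℕ, ∀ N : ℕ, N₀ ≤ N →
      ∀ s, Admissible S s → ∀ r : ℝ, 0 ≤ r → r ≤ 1 / dotp (γ s) s →
        Metric.infDist (r • s) ((Real.log N)⁻¹ • SN N) ≤ ε :=
  stmt16_general c γ hc hγ hcpos hγpos f hf S C hreg α β SN hSN
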